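/- Let N be a reversible partial DFA recognizing L, U the finite set of words u such that u = ε or δ(q₀,u) is defined and not an ∞-state of the minimal automaton, and define N′ on state set Q × U with initial state (q₀, ε), final states F × U, and transition (q,u)·a = (qa, ua) if (q·a)* is not an ∞-state, and (qa, u) otherwise. Then N′ is reversible, L(N′) = L, each state (q,u) is equivalent to q, and for every ⊕-state p of the minimal automaton reachable by words u₁,…,u_n (n ≥ 2), the states (q_{u_i}, u_i) are n pairwise distinct reachable states of N′ equivalent to p. -/

import Mathlib

/-- A partial deterministic finite automaton (partial DFA). -/
structure PDFA (Q A : Type) where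
  step : Q → A → Option Q
  init : Q
  acc : Q → Prop

namespace PDFA

variable {Q A : Type}

/-- Extended (partial) transition function on words. -/
def run (M : PDFA Q A) : Q → List A → Option Q
  | q, [] => some q
  | q, a :: w => (M.step q a).bind fun q' => M.run q' w

/-- The language accepted from state `q`. -/
def LangFrom (M : PDFA Q A) (q : Q) : Set (List A) :=
  {w | ∃ q', M.run q w = some q' ∧ M.acc q'}

/-- The language of the automaton. -/
def Lang (M : PDFA Q A) : Set (List A) := M.LangFrom M.init

/-- An automaton is reversible if distinct states are never merged by a letter. -/
def Reversible (M : PDFA Q A) : Prop :=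
  ∀ p q a r, M.step p a = some r → M.step q a = some r → p = q

/-- `Θ` is a congruence: an equivalence relation saturating the final states and
compatible with the (partial) action, including definedness. -/
def IsCongruence (M : PDFA Q A) (Θ : Q → Q → Prop) : Prop :=
  Equivalence Θ ∧
  (∀ p q, Θ p q → (M.acc p ↔ M.acc q)) ∧
  (∀ p q a, Θ p q → ((M.step p a).isSome ↔ (M.step q a).isSome) ∧
    ∀ p' q', M.step p a = some p' → M.step q a = some q' → Θ p' q')

/-- A reversible congruence: a congruence whose factor automaton is reversible,
equivalently `p·a Θ q·a` (both defined) implies `p Θ q`. -/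
def IsRevCongruence (M : PDFA Q A) (Θ : Q → Q → Prop) : Prop :=
  M.IsCongruence Θ ∧
  ∀ p q a p' q', M.step p a = some p' → M.step q a = some q' → Θ p' q' → Θ p q

def Reachable (M : PDFA Q A) (q : Q) : Prop := ∃ w, M.run M.init w = some q

def Productive (M : PDFA Q A) (q : Q) : Prop := ∃ w, w ∈ M.LangFrom q

/-- A trim automaton: all states reachable and productive. -/
def Trim (M : PDFA Q A) : Prop := ∀ q, M.Reachable q ∧ M.Productive q

/-- The set of access words of a state. -/
def AccessWords (M : PDFA Q A) (q : Q) : Set (List A) :=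
  {w | M.run M.init w = some q}

/-- An `∞`-state: reachable by infinitely many words. -/
def InfState (M : PDFA Q A) (q : Q) : Prop := (M.AccessWords q).Infinite

/-- A `1`-state: reachable by exactly one word. -/
def OneState (M : PDFA Q A) (q : Q) : Prop := ∃! w, w ∈ M.AccessWords q

/-- A `⊕`-state: neither a `1`-state nor an `∞`-state. -/
def PlusState (M : PDFA Q A) (q : Q) : Prop := ¬ M.OneState q ∧ ¬ M.InfState q

/-- An irreversible state: reachable from two distinct states by a common word. -/
def IrrevState (M : PDFA Q A) (r : Q) : Prop :=
  ∃ p₁ p₂ u, p₁ ≠ p₂ ∧ M.run p₁ u = some r ∧ M.run p₂ u = some r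

/-- Zig-zag states: the least set containing the `∞`-states, closed under defined
forward transitions, and containing every `⊕`-state with a transition into the set. -/
inductive ZigZag (M : PDFA Q A) : Q → Prop
  | inf {q} : M.InfState q → ZigZag M q
  | fwd {q a q'} : ZigZag M q → M.step q a = some q' → ZigZag M q'
  | back {q a q'} : M.PlusState q → M.step q a = some q' → ZigZag M q' → ZigZag M q

/-- A reduced reversible automaton: trim, reversible, with no nontrivial reversible
congruence. -/
def ReducedReversible (M : PDFA Q A) : Prop :=
  M.Trim ∧ M.Reversible ∧ ∀ Θ, M.IsRevCongruence Θ → ∀ p q, Θ p q → p = q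

/-- `n`-fold repetition of a word. -/
def wpow (w : List A) (n : ℕ) : List A := (List.replicate n w).flatten

end PDFA
open scoped Classical

/-!
Since the `∞`-states of the minimal automaton are closed under transitions, along an access word
of a non-`∞`-state the second component of `N'` never stops recording, so such a word leads to
the state of `N'` carrying the word itself, and distinct access words give distinct states. The
first component follows `N` exactly, which gives the equivalences; reversibility follows from
that of `N` together with right cancellation of words.
-/

namespace PDFA

variable {Q Qm A : Type}

theorem run_append (M : PDFA Q A) (q : Q) (v w : List A) :
    M.run q (v ++ w) = (M.run q v).bind fun r => M.run r w := by
  induction v generalizing q with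
  | nil => rfl
  | cons a v ih =>
    simp only [List.cons_append, run]
    cases M.step q a with
    | none => rfl
    | some q' => simp [ih]

theorem run_of_step_hom {N : PDFA Q A} {M : PDFA Qm A} {f : Q → Qm}
    (hf : ∀ q a q', N.step q a = some q' → M.step (f q) a = some (f q'))
    {w : List A} {q q' : Q} (h : N.run q w = some q') : M.run (f q) w = some (f q') := by
  induction w generalizing q with
  | nil => cases h; rfl
  | cons a w ih =>
    simp only [run] at h ⊢
    cases hs : N.step q a with
    | none => simp [hs] at h
    | some q₁ =>
      rw [hs, Option.bind_some] at h
      rw [hf q a q₁ hs, Option.bind_some]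
      exact ih h

theorem InfState.of_run {M : PDFA Q A} {r r' : Q} {w : List A}
    (h : M.InfState r) (hw : M.run r w = some r') : M.InfState r' := by
  have hsub : (· ++ w) '' M.AccessWords r ⊆ M.AccessWords r' := by
    rintro _ ⟨v, hv, rfl⟩
    simp only [AccessWords, Set.mem_ofPred_eq, run_append] at hv ⊢
    rw [hv, Option.bind_some, hw]
  exact (h.image fun _ _ _ _ => List.append_cancel_right).mono hsub

theorem finite_setOf_run_init_not_infState [Finite Q] (M : PDFA Q A) :
    {u : List A | u = [] ∨ ∃ p, M.run M.init u = some p ∧ ¬ M.InfState p}.Finite := by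
  have hfin : ∀ p, {u | M.run M.init u = some p ∧ ¬ M.InfState p}.Finite := fun p => by
    by_cases hp : M.InfState p
    · exact Set.finite_empty.subset fun u hu => hu.2 hp
    · exact (Set.not_infinite.mp hp).subset fun u hu => hu.1
  refine ((Set.finite_iUnion hfin).insert []).subset ?_
  rintro u (rfl | ⟨p, hu⟩)
  · exact Set.mem_insert _ _
  · exact Set.mem_insert_of_mem _ (Set.mem_iUnion.2 ⟨p, hu⟩)

theorem exists_run_init_of_lang_eq {N : PDFA Q A} {M : PDFA Qm A} {f : Q → Qm}
    (hlang : N.Lang = M.Lang) (hfinit : f N.init = M.init)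
    (hf : ∀ q a q', N.step q a = some q' → M.step (f q) a = some (f q'))
    {p : Qm} (hp : M.Productive p) {u : List A} (hu : M.run M.init u = some p) :
    ∃ q, N.run N.init u = some q ∧ f q = p := by
  obtain ⟨w, r, hwr, hr⟩ := hp
  have huw : u ++ w ∈ N.Lang := by
    rw [hlang]
    exact ⟨r, by rw [run_append, hu, Option.bind_some, hwr], hr⟩
  obtain ⟨_, hrun, -⟩ := huw
  rw [run_append] at hrun
  cases hq : N.run N.init u with
  | none => simp [hq] at hrun
  | some q =>
    have hfq := run_of_step_hom hf hq
    rw [hfinit, hu] at hfq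
    exact ⟨q, rfl, (Option.some_injective _ hfq).symm⟩

def IsWordTracking (N : PDFA Q A) (P : Q → Prop) (N' : PDFA (Q × List A) A) : Prop :=
  ∀ q u a, N'.step (q, u) a = (N.step q a).map fun q' => if P q' then (q', u) else (q', u ++ [a])

namespace IsWordTracking

variable {N : PDFA Q A} {P : Q → Prop} {N' : PDFA (Q × List A) A}

theorem map_fst_run (hN' : IsWordTracking N P N') (w : List A) (q : Q) (u : List A) :
    (N'.run (q, u) w).map Prod.fst = N.run q w := by
  induction w generalizing q u with
  | nil => rfl
  | cons a w ih =>
    simp only [run, hN' q u a]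
    cases N.step q a with
    | none => rfl
    | some q₁ =>
      simp only [Option.map_some, Option.bind_some]
      split_ifs
      · exact ih q₁ u
      · exact ih q₁ (u ++ [a])

theorem langFrom_eq (hN' : IsWordTracking N P N') (hacc : ∀ q u, N'.acc (q, u) ↔ N.acc q)
    (q : Q) (u : List A) : N'.LangFrom (q, u) = N.LangFrom q := by
  ext w
  simp only [LangFrom, Set.mem_ofPred_eq, ← hN'.map_fst_run w q u, Option.map_eq_some_iff]
  constructor
  · rintro ⟨⟨q', u'⟩, hrun, hq'⟩
    exact ⟨q', ⟨_, hrun, rfl⟩, (hacc q' u').1 hq'⟩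
  · rintro ⟨_, ⟨⟨q', u'⟩, hrun, rfl⟩, hq'⟩
    exact ⟨_, hrun, (hacc q' u').2 hq'⟩

theorem reversible (hN' : IsWordTracking N P N') (hN : N.Reversible) : N'.Reversible := by
  rintro ⟨p, u⟩ ⟨q, v⟩ a r hp hq
  rw [hN', Option.map_eq_some_iff] at hp hq
  obtain ⟨p', hp', rfl⟩ := hp
  obtain ⟨q', hq', hr⟩ := hq
  have hpq' : q' = p' := by split_ifs at hr <;> exact congrArg Prod.fst hr
  subst hpq'
  obtain rfl := hN p q a q' hp' hq'
  split_ifs at hr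
  · rw [(Prod.mk.inj hr).2]
  · rw [List.append_cancel_right (Prod.mk.inj hr).2]

theorem run_eq_some_append_of_not (hN' : IsWordTracking N P N')
    (hP : ∀ q w q', N.run q w = some q' → P q → P q')
    {w : List A} {q q' : Q} (hw : N.run q w = some q') (hq' : ¬ P q') (u : List A) :
    N'.run (q, u) w = some (q', u ++ w) := by
  induction w generalizing q u with
  | nil => cases hw; simp [run]
  | cons a w ih =>
    simp only [run] at hw
    cases hs : N.step q a with
    | none => simp [hs] at hw
    | some q₁ =>
      rw [hs, Option.bind_some] at hw
      have hq₁ : ¬ P q₁ := fun h => hq' (hP q₁ w q' hw h)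
      simp only [run, hN' q u a, hs, Option.map_some, if_neg hq₁, Option.bind_some]
      simpa using ih hw (u ++ [a])

end IsWordTracking

end PDFA

theorem stmt14_general {Q Qm A : Type} [Fintype Qm] (N : PDFA Q A) (M : PDFA Qm A)
    (hMtrim : M.Trim)
    (hNrev : N.Reversible) (hlang : N.Lang = M.Lang)
    (f : Q → Qm)
    (hf : ∀ q : Q, M.LangFrom (f q) = N.LangFrom q)
    (hfhom : ∀ (q : Q) (a : A) (q' : Q),
      N.step q a = some q' → M.step (f q) a = some (f q'))
    (hfinit : f N.init = M.init)
    (N' : PDFA (Q × List A) A)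
    (hinit' : N'.init = (N.init, []))
    (hacc' : ∀ (q : Q) (u : List A), N'.acc (q, u) ↔ N.acc q)
    (hstep' : ∀ (q : Q) (u : List A) (a : A), N'.step (q, u) a =
      (N.step q a).map fun q' =>
        if M.InfState (f q') then (q', u) else (q', u ++ [a])) :
    ({u : List A | u = [] ∨ ∃ p : Qm, M.run M.init u = some p ∧ ¬ M.InfState p}.Finite) ∧
    N'.Reversible ∧ N'.Lang = N.Lang ∧
    (∀ (q : Q) (u : List A), N'.LangFrom (q, u) = N.LangFrom q) ∧
    (∀ p : Qm, M.PlusState p →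
      ∀ u₁ u₂ : List A, u₁ ≠ u₂ →
        M.run M.init u₁ = some p → M.run M.init u₂ = some p →
        ∃ s₁ s₂ : Q × List A, s₁ ≠ s₂ ∧
          N'.run N'.init u₁ = some s₁ ∧ N'.run N'.init u₂ = some s₂ ∧
          N'.LangFrom s₁ = M.LangFrom p ∧ N'.LangFrom s₂ = M.LangFrom p) := by
  have hN' : PDFA.IsWordTracking N (fun q => M.InfState (f q)) N' := hstep'
  have hinf : ∀ q w q', N.run q w = some q' → M.InfState (f q) → M.InfState (f q') :=
    fun q w q' hw h => h.of_run (PDFA.run_of_step_hom hfhom hw)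
  have hequiv := hN'.langFrom_eq hacc'
  refine ⟨M.finite_setOf_run_init_not_infState, hN'.reversible hNrev,
    by rw [PDFA.Lang, hinit', hequiv]; rfl, hequiv, ?_⟩
  intro p hp u₁ u₂ hne h₁ h₂
  obtain ⟨q₁, hq₁, rfl⟩ := PDFA.exists_run_init_of_lang_eq hlang hfinit hfhom (hMtrim _).2 h₁
  obtain ⟨q₂, hq₂, hfq⟩ := PDFA.exists_run_init_of_lang_eq hlang hfinit hfhom (hMtrim _).2 h₂
  refine ⟨(q₁, u₁), (q₂, u₂), fun h => hne (congrArg Prod.snd h), ?_, ?_, ?_, ?_⟩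
  · rw [hinit']; exact hN'.run_eq_some_append_of_not hinf hq₁ hp.2 []
  · rw [hinit']; exact hN'.run_eq_some_append_of_not hinf hq₂ (hfq ▸ hp.2) []
  · rw [hequiv, hf]
  · rw [hequiv, ← hfq, hf]

/-- The word-tracking construction `N'` on `Q × Σ*` (restricted to the
finite set `U` of access words of non-`∞`-states, plus `ε`) is reversible, recognizes
the same language, has each state `(q,u)` equivalent to `q`, and provides, for each
`⊕`-state `p` of the minimal automaton, pairwise distinct reachable states equivalent
to `p`, one for each access word of `p`. -/
theorem stmt14 {Q Qm A : Type} [Fintype Qm] (N : PDFA Q A) (M : PDFA Qm A)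
    (hMtrim : M.Trim)
    (hMmin : ∀ p q : Qm, M.LangFrom p = M.LangFrom q → p = q)
    (hNrev : N.Reversible) (hlang : N.Lang = M.Lang)
    (f : Q → Qm)
    (hf : ∀ q : Q, M.LangFrom (f q) = N.LangFrom q)
    (hfhom : ∀ (q : Q) (a : A) (q' : Q),
      N.step q a = some q' → M.step (f q) a = some (f q'))
    (hfinit : f N.init = M.init)
    (N' : PDFA (Q × List A) A)
    (hinit' : N'.init = (N.init, []))
    (hacc' : ∀ (q : Q) (u : List A), N'.acc (q, u) ↔ N.acc q)
    (hstep' : ∀ (q : Q) (u : List A) (a : A), N'.step (q, u) a =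
      (N.step q a).map fun q' =>
        if M.InfState (f q') then (q', u) else (q', u ++ [a])) :
    ({u : List A | u = [] ∨ ∃ p : Qm, M.run M.init u = some p ∧ ¬ M.InfState p}.Finite) ∧
    N'.Reversible ∧ N'.Lang = N.Lang ∧
    (∀ (q : Q) (u : List A), N'.LangFrom (q, u) = N.LangFrom q) ∧
    (∀ p : Qm, M.PlusState p →
      ∀ u₁ u₂ : List A, u₁ ≠ u₂ →
        M.run M.init u₁ = some p → M.run M.init u₂ = some p →
        ∃ s₁ s₂ : Q × List A, s₁ ≠ s₂ ∧
          N'.run N'.init u₁ = some s₁ ∧ N'.run N'.init u₂ = some s₂ ∧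
          N'.LangFrom s₁ = M.LangFrom p ∧ N'.LangFrom s₂ = M.LangFrom p) :=
  stmt14_general N M hMtrim hNrev hlang f hf hfhom hfinit N' hinit' hacc' hstep'
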